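/- For every T > 0, the mixed partial derivative ∂_T ∂_S² ∂_U² F_even(S,T,U) evaluated at S = U = 0 equals 4·(d/dT)[ − (C'(T)/C(T))⁴ + 4(Σ² − α²)·(C'(T)/C(T))² ]. -/

import Mathlib

open Real MeasureTheory Filter

/-- `Σ = √(3α²/2 − 1/8)`. -/
noncomputable def Sg (α : ℝ) : ℝ := Real.sqrt (3 * α ^ 2 / 2 - 1 / 8)

/-- `C(T) = Σ·cosh(ΣT) + α·sinh(ΣT)`. -/
noncomputable def Cg (α : ℝ) (T : ℝ) : ℝ :=
  Sg α * Real.cosh (Sg α * T) + α * Real.sinh (Sg α * T)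

/-- `Ĉ(T) = 2αΣ·cosh(ΣT) + (α²+Σ²)·sinh(ΣT)`. -/
noncomputable def Chat (α : ℝ) (T : ℝ) : ℝ :=
  2 * α * Sg α * Real.cosh (Sg α * T) + (α ^ 2 + Sg α ^ 2) * Real.sinh (Sg α * T)

/-- The even part of the three-point generating function. -/
noncomputable def Feven (α : ℝ) (S T U : ℝ) : ℝ :=
  (1 / Sg α ^ 2) * (Cg α S ^ 2 * Cg α T ^ 2 * Cg α U ^ 2 * Cg α (S + T + U) ^ 2)
    / (Cg α (S + T) ^ 2 * Cg α (T + U) ^ 2 * Cg α (U + S) ^ 2)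

/-- The odd part of the three-point generating function. -/
noncomputable def Fodd (α : ℝ) (S T U : ℝ) : ℝ :=
  ((α ^ 2 - Sg α ^ 2) ^ 2 / Sg α ^ 2) *
    (Real.sinh (Sg α * S) ^ 2 * Real.sinh (Sg α * T) ^ 2 * Real.sinh (Sg α * U) ^ 2
      * Chat α (S + T + U) ^ 2)
    / (Cg α (S + T) ^ 2 * Cg α (T + U) ^ 2 * Cg α (U + S) ^ 2)

/-- `F = F_even + F_odd`. -/
noncomputable def Fg (α : ℝ) (S T U : ℝ) : ℝ := Feven α S T U + Fodd α S T U

/-!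
With `L = C'/C`, the equation `C'' = Σ²C` becomes the Riccati equation `L' = Σ² - L²`, and
`L 0 = α`. Since `∂_U log F_even = 2 (L U + L (S+T+U) - L (T+U) - L (U+S))` and
`F_even (S, T, 0) = 1`, the second `U`-derivative at `U = 0` is a polynomial in values of `L`.
Differentiating twice more in `S` at `S = 0` with the Riccati equation, everything collapses to
`4 (-L(T)⁴ + 4 (Σ² - α²) L(T)²)` plus a constant, so the `T`-derivative is immediate.
-/

open Topology

theorem iteratedDeriv_two_eq_of_eventually_hasDerivAt {f f' : ℝ → ℝ} {x f'' : ℝ}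
    (hf : ∀ᶠ y in 𝓝 x, HasDerivAt f (f' y) y) (hf' : HasDerivAt f' f'' x) :
    iteratedDeriv 2 f x = f'' := by
  have hderiv : deriv f =ᶠ[𝓝 x] f' := hf.mono fun y hy => hy.deriv
  rw [iteratedDeriv_succ, iteratedDeriv_one, hderiv.deriv_eq, hf'.deriv]

theorem hasDerivAt_sq_mul_sq_div_sq_mul_sq {p q r s : ℝ → ℝ} {p' q' r' s' x : ℝ}
    (hp : HasDerivAt p p' x) (hq : HasDerivAt q q' x) (hr : HasDerivAt r r' x)
    (hs : HasDerivAt s s' x) (hp0 : p x ≠ 0) (hq0 : q x ≠ 0) (hr0 : r x ≠ 0)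
    (hs0 : s x ≠ 0) :
    HasDerivAt (fun y => p y ^ 2 * q y ^ 2 / (r y ^ 2 * s y ^ 2))
      (p x ^ 2 * q x ^ 2 / (r x ^ 2 * s x ^ 2) *
        (2 * (p' / p x + q' / q x - r' / r x - s' / s x))) x := by
  refine (((hp.fun_pow 2).fun_mul (hq.fun_pow 2)).fun_div
    ((hr.fun_pow 2).fun_mul (hs.fun_pow 2)) (by positivity)).congr_deriv ?_
  field_simp
  ring

noncomputable def tripleRatio (C : ℝ → ℝ) (S T U : ℝ) : ℝ :=
  C S ^ 2 * C T ^ 2 * C U ^ 2 * C (S + T + U) ^ 2 /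
    (C 0 ^ 2 * C (S + T) ^ 2 * C (T + U) ^ 2 * C (U + S) ^ 2)

section Riccati

variable {L : ℝ → ℝ} {k : ℝ} {s : Set ℝ}

-- `∂_U² (tripleRatio C S T)` at `U = 0`, in terms of `L = logDeriv C`.
def secondDerivU (L : ℝ → ℝ) (S T : ℝ) : ℝ :=
  4 * (L 0 + L (S + T) - L T - L S) ^ 2 + 2 * (L S ^ 2 + L T ^ 2 - L 0 ^ 2 - L (S + T) ^ 2)

theorem iteratedDeriv_two_secondDerivU (hs : IsOpen s)
    (hL : ∀ x ∈ s, HasDerivAt L (k - L x ^ 2) x) {T : ℝ} (h0 : 0 ∈ s) (hT : T ∈ s) :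
    iteratedDeriv 2 (fun S => secondDerivU L S T) 0 =
      4 * (-L T ^ 4 + 4 * (k - L 0 ^ 2) * L T ^ 2)
        + (8 * L 0 ^ 4 + 4 * (k - 3 * L 0 ^ 2) * (k - L 0 ^ 2) - 4 * k ^ 2) := by
  have hshift : ∀ y, y + T ∈ s → HasDerivAt (fun S => L (S + T)) (k - L (y + T) ^ 2) y :=
    fun y hy => (hL _ hy).comp_add_const y T
  have hnear : ∀ᶠ y in 𝓝 (0 : ℝ), y ∈ s ∧ y + T ∈ s := by
    refine (hs.eventually_mem h0).and ?_
    have : ContinuousAt (fun y : ℝ => y + T) 0 := by fun_prop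
    exact this.eventually_mem (hs.mem_nhds (by simpa using hT))
  refine iteratedDeriv_two_eq_of_eventually_hasDerivAt
    (f' := fun S => 8 * (L 0 + L (S + T) - L T - L S) * (L S ^ 2 - L (S + T) ^ 2)
      + 4 * (L S * (k - L S ^ 2) - L (S + T) * (k - L (S + T) ^ 2))) ?_ ?_
  · filter_upwards [hnear] with y ⟨hy, hyT⟩
    have hA := (((hshift y hyT).const_add (L 0)).sub_const (L T)).fun_sub (hL y hy)
    have hB := ((((hL y hy).fun_pow 2).add_const (L T ^ 2)).sub_const (L 0 ^ 2)).fun_sub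
      ((hshift y hyT).fun_pow 2)
    refine (((hA.fun_pow 2).const_mul 4).fun_add (hB.const_mul 2)).congr_deriv ?_
    norm_num
    ring
  · have hT0 : 0 + T ∈ s := by simpa using hT
    have hA := (((hshift 0 hT0).const_add (L 0)).sub_const (L T)).fun_sub (hL 0 h0)
    have hB := ((hL 0 h0).fun_pow 2).fun_sub ((hshift 0 hT0).fun_pow 2)
    have hP := ((hL 0 h0).fun_mul (((hL 0 h0).fun_pow 2).const_sub k)).fun_sub
      ((hshift 0 hT0).fun_mul (((hshift 0 hT0).fun_pow 2).const_sub k))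
    refine (((hA.const_mul 8).fun_mul hB).fun_add (hP.const_mul 4)).congr_deriv ?_
    simp only [zero_add]
    norm_num
    ring

end Riccati

section TripleRatio

variable {C : ℝ → ℝ} {k : ℝ}

theorem hasDerivAt_logDeriv_riccati (hC : Differentiable ℝ C)
    (hC' : ∀ x, HasDerivAt (deriv C) (k * C x) x) {x : ℝ} (hx : C x ≠ 0) :
    HasDerivAt (logDeriv C) (k - logDeriv C x ^ 2) x := by
  refine ((hC' x).div (hC x).hasDerivAt hx).congr_deriv ?_
  rw [logDeriv_apply]
  field_simp

theorem tripleRatio_zero {S T : ℝ} (h0 : C 0 ≠ 0) (hS : C S ≠ 0) (hT : C T ≠ 0)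
    (hST : C (S + T) ≠ 0) : tripleRatio C S T 0 = 1 := by
  simp only [tripleRatio, add_zero, zero_add]
  field_simp

theorem hasDerivAt_tripleRatio (hC : Differentiable ℝ C) {S T U : ℝ} (hU : C U ≠ 0)
    (hSTU : C (S + T + U) ≠ 0) (hTU : C (T + U) ≠ 0) (hUS : C (U + S) ≠ 0) :
    HasDerivAt (tripleRatio C S T) (tripleRatio C S T U * (2 * (logDeriv C U
      + logDeriv C (S + T + U) - logDeriv C (T + U) - logDeriv C (U + S)))) U := by
  set K := C S ^ 2 * C T ^ 2 / (C 0 ^ 2 * C (S + T) ^ 2)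
  have hform : tripleRatio C S T = fun U =>
      K * (C U ^ 2 * C (S + T + U) ^ 2 / (C (T + U) ^ 2 * C (U + S) ^ 2)) := by
    funext U
    simp only [tripleRatio, K]
    ring
  have hd : ∀ x, HasDerivAt C (deriv C x) x := fun x => (hC x).hasDerivAt
  rw [hform]
  refine ((hasDerivAt_sq_mul_sq_div_sq_mul_sq (hd U) ((hd _).comp_const_add (S + T) U)
    ((hd _).comp_const_add T U) ((hd _).comp_add_const U S) hU hSTU hTU hUS).const_mul K
    ).congr_deriv ?_
  simp only [logDeriv_apply]
  ring

theorem iteratedDeriv_two_tripleRatio (hC : Differentiable ℝ C)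
    (hC' : ∀ x, HasDerivAt (deriv C) (k * C x) x) {S T : ℝ} (h0 : C 0 ≠ 0) (hS : C S ≠ 0)
    (hT : C T ≠ 0) (hST : C (S + T) ≠ 0) :
    iteratedDeriv 2 (tripleRatio C S T) 0 = secondDerivU (logDeriv C) S T := by
  set L := logDeriv C
  have hnear : ∀ a, C a ≠ 0 → ∀ᶠ y in 𝓝 (0 : ℝ), C (a + y) ≠ 0 := fun a ha =>
    (hC.continuous.comp (continuous_const_add a)).continuousAt.eventually_ne (by simpa using ha)
  refine iteratedDeriv_two_eq_of_eventually_hasDerivAt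
    (f' := fun U => tripleRatio C S T U * (2 * (L U + L (S + T + U) - L (T + U) - L (U + S))))
    ?_ ?_
  · filter_upwards [hnear 0 h0, hnear _ hST, hnear T hT, hnear S hS] with U hU hSTU hTU hUS
    rw [zero_add] at hU
    rw [add_comm] at hUS
    exact hasDerivAt_tripleRatio hC hU hSTU hTU hUS
  · have hL : ∀ x, C x ≠ 0 → HasDerivAt L (k - L x ^ 2) x := fun x hx =>
      hasDerivAt_logDeriv_riccati hC hC' hx
    have hM := (((hL 0 h0).fun_add ((hL _ (by simpa using hST)).comp_const_add (S + T) 0)).fun_sub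
      ((hL _ (by simpa using hT)).comp_const_add T 0)).fun_sub
      ((hL _ (by simpa using hS)).comp_add_const 0 S)
    refine ((hasDerivAt_tripleRatio hC (by simpa using h0) (by simpa using hST)
      (by simpa using hT) (by simpa using hS)).fun_mul (hM.const_mul 2)).congr_deriv ?_
    simp only [add_zero, zero_add, tripleRatio_zero h0 hS hT hST, secondDerivU]
    ring

theorem deriv_iteratedDeriv_tripleRatio (hC : Differentiable ℝ C)
    (hC' : ∀ x, HasDerivAt (deriv C) (k * C x) x) {T : ℝ} (h0 : C 0 ≠ 0) (hT : C T ≠ 0) :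
    deriv (fun T' => iteratedDeriv 2 (fun S' => iteratedDeriv 2 (tripleRatio C S' T') 0) 0) T
      = 4 * deriv (fun T' => -logDeriv C T' ^ 4
          + 4 * (k - logDeriv C 0 ^ 2) * logDeriv C T' ^ 2) T := by
  set L := logDeriv C
  set s := {x | C x ≠ 0}
  have hs : IsOpen s := isOpen_ne_fun hC.continuous continuous_const
  have hL : ∀ x ∈ s, HasDerivAt L (k - L x ^ 2) x := fun x hx =>
    hasDerivAt_logDeriv_riccati hC hC' hx
  have hSU : ∀ T' ∈ s, iteratedDeriv 2 (fun S' => iteratedDeriv 2 (tripleRatio C S' T') 0) 0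
      = 4 * (-L T' ^ 4 + 4 * (k - L 0 ^ 2) * L T' ^ 2)
        + (8 * L 0 ^ 4 + 4 * (k - 3 * L 0 ^ 2) * (k - L 0 ^ 2) - 4 * k ^ 2) := by
    intro T' hT'
    have hU : (fun S' => iteratedDeriv 2 (tripleRatio C S' T') 0)
        =ᶠ[𝓝 0] fun S' => secondDerivU L S' T' := by
      have hcont : ContinuousAt (fun S' : ℝ => C S' * C (S' + T')) 0 := by
        have := hC.continuous
        fun_prop
      filter_upwards [hcont.eventually_ne (by rw [zero_add]; exact mul_ne_zero h0 hT')] with S' hS'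
      exact iteratedDeriv_two_tripleRatio hC hC' h0 (left_ne_zero_of_mul hS') hT'
        (right_ne_zero_of_mul hS')
    rw [hU.iteratedDeriv_eq, iteratedDeriv_two_secondDerivU hs hL h0 hT']
  rw [Filter.EventuallyEq.deriv_eq ((hs.eventually_mem hT).mono hSU), deriv_add_const,
    deriv_const_mul_field]

end TripleRatio

theorem hasDerivAt_cosh_add_sinh (a b σ x : ℝ) :
    HasDerivAt (fun x => a * cosh (σ * x) + b * sinh (σ * x))
      (σ * b * cosh (σ * x) + σ * a * sinh (σ * x)) x := by
  have hlin : HasDerivAt (fun x => σ * x) σ x := by simpa using (hasDerivAt_id x).const_mul σ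
  exact ((hlin.cosh.const_mul a).fun_add (hlin.sinh.const_mul b)).congr_deriv (by ring)

theorem Sg_pos {α : ℝ} (h1 : 1 / (2 * √3) < α) : 0 < Sg α := by
  have hsq : (1 / (2 * √3)) ^ 2 = 1 / 12 := by
    rw [div_pow, mul_pow, sq_sqrt (by norm_num)]
    norm_num
  have := pow_lt_pow_left₀ h1 (by positivity) two_ne_zero
  exact Real.sqrt_pos.2 (by linarith)

theorem Cg_pos {α x : ℝ} (hα : 0 ≤ α) (hσ : 0 < Sg α) (hx : 0 ≤ x) : 0 < Cg α x := by
  have hsinh : 0 ≤ sinh (Sg α * x) := Real.sinh_nonneg_iff.2 (by positivity)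
  unfold Cg
  positivity

theorem Cg_zero (α : ℝ) : Cg α 0 = Sg α := by
  simp [Cg]

theorem deriv_Cg (α : ℝ) :
    deriv (Cg α) = fun x => Sg α * α * cosh (Sg α * x) + Sg α * Sg α * sinh (Sg α * x) :=
  funext fun x => (hasDerivAt_cosh_add_sinh (Sg α) α (Sg α) x).deriv

theorem differentiable_Cg (α : ℝ) : Differentiable ℝ (Cg α) := fun x =>
  (hasDerivAt_cosh_add_sinh (Sg α) α (Sg α) x).differentiableAt

theorem hasDerivAt_deriv_Cg (α x : ℝ) : HasDerivAt (deriv (Cg α)) (Sg α ^ 2 * Cg α x) x := by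
  rw [deriv_Cg]
  exact (hasDerivAt_cosh_add_sinh _ _ (Sg α) x).congr_deriv (by unfold Cg; ring)

theorem logDeriv_Cg_zero {α : ℝ} (hσ : Sg α ≠ 0) : logDeriv (Cg α) 0 = α := by
  rw [logDeriv_apply, deriv_Cg]
  simp only [Cg, mul_zero, cosh_zero, sinh_zero, mul_one, add_zero]
  field_simp

theorem stmt9_general (α : ℝ) (h1 : 1 / (2 * Real.sqrt 3) < α) :
    ∀ T : ℝ, 0 < T →
      deriv (fun T' =>
          iteratedDeriv 2 (fun S' => iteratedDeriv 2 (fun U' => Feven α S' T' U') 0) 0) T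
        = 4 * deriv (fun T' => -(deriv (Cg α) T' / Cg α T') ^ 4
            + 4 * (Sg α ^ 2 - α ^ 2) * (deriv (Cg α) T' / Cg α T') ^ 2) T := by
  intro T hT
  have hσ := Sg_pos h1
  have hα : 0 ≤ α := le_trans (by positivity) h1.le
  have hFeven : ∀ S T U, Feven α S T U = tripleRatio (Cg α) S T U := by
    intro S T U
    simp only [Feven, tripleRatio, Cg_zero]
    ring
  have h := deriv_iteratedDeriv_tripleRatio (differentiable_Cg α) (hasDerivAt_deriv_Cg α)
    (Cg_pos hα hσ le_rfl).ne' (Cg_pos hα hσ hT.le).ne'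
  rw [logDeriv_Cg_zero hσ.ne'] at h
  simpa only [hFeven, logDeriv_apply] using h

/-- For `T > 0`,
`∂_T ∂_S² ∂_U² F_even(S,T,U)|_{S=U=0}
  = 4·(d/dT)[−(C'(T)/C(T))⁴ + 4(Σ² − α²)(C'(T)/C(T))²]`. -/
theorem stmt9 (α : ℝ) (h1 : 1 / (2 * Real.sqrt 3) < α) (h2 : α < 1 / 2) :
    ∀ T : ℝ, 0 < T →
      deriv (fun T' =>
          iteratedDeriv 2 (fun S' => iteratedDeriv 2 (fun U' => Feven α S' T' U') 0) 0) T
        = 4 * deriv (fun T' => -(deriv (Cg α) T' / Cg α T') ^ 4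
            + 4 * (Sg α ^ 2 - α ^ 2) * (deriv (Cg α) T' / Cg α T') ^ 2) T :=
  stmt9_general α h1
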